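/- arXiv:math/0504064 — 5 statements merged into one kernel-verified Lean document; each statement's English description precedes it below -/
import Mathlib

section
/- For all μ > 0, τ > 0, and every integer k ≥ 1, sup_{0 ≤ λ ≤ 1/τ} λ^μ (1−τλ)^k ≤ (μ/(τ e))^μ · k^{-μ}. -/
/-!
Bound `(1 - τ l) ^ k` by `exp (-k τ l)`; the function `l ↦ l ^ μ * exp (-k τ l)` is maximal on
`[0, ∞)` at `l = μ / (k τ)`, where it equals `(μ / (k τ e)) ^ μ`.
-/

open Real

/- After taking logarithms this is `log x ≤ x - 1` at `x = c l / μ`. -/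
lemma rpow_mul_exp_neg_mul_le {μ c l : ℝ} (hμ : 0 < μ) (hc : 0 < c) (hl : 0 ≤ l) :
    l ^ μ * exp (-(c * l)) ≤ (μ / (c * exp 1)) ^ μ := by
  rcases hl.eq_or_lt with rfl | hl
  · rw [zero_rpow hμ.ne', zero_mul]
    positivity
  have hlog : log (c * l / μ) ≤ c * l / μ - 1 := log_le_sub_one_of_pos (by positivity)
  rw [log_div (by positivity) hμ.ne', log_mul hc.ne' hl.ne'] at hlog
  rw [rpow_def_of_pos hl, rpow_def_of_pos (by positivity), ← exp_add, exp_le_exp,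
    log_div hμ.ne' (by positivity), log_mul hc.ne' (exp_pos 1).ne', log_exp]
  have hscaled : μ * (log c + log l - log μ) ≤ c * l - μ :=
    calc _ ≤ μ * (c * l / μ - 1) := mul_le_mul_of_nonneg_left hlog hμ.le
      _ = c * l - μ := by field_simp
  linarith

lemma one_sub_pow_le_exp_neg_mul {x : ℝ} (hx : x ≤ 1) (k : ℕ) :
    (1 - x) ^ k ≤ exp (-(k * x)) :=
  calc (1 - x) ^ k ≤ exp (-x) ^ k := pow_le_pow_left₀ (by linarith) (one_sub_le_exp_neg x) k
    _ = exp (-(k * x)) := by rw [← exp_nat_mul, mul_neg]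

theorem landweber_weighted_residual_bound (μ τ : ℝ) (hμ : 0 < μ) (hτ : 0 < τ)
    (k : ℕ) (hk : 1 ≤ k) :
    ∀ l ∈ Set.Icc (0:ℝ) (1 / τ),
      l ^ μ * (1 - τ * l) ^ k ≤ (μ / (τ * Real.exp 1)) ^ μ * (k : ℝ) ^ (-μ) := by
  rintro l ⟨hl0, hl1⟩
  have hk0 : (0 : ℝ) < k := Nat.cast_pos.mpr hk
  have hτl : τ * l ≤ 1 := by rwa [le_div_iff₀' hτ] at hl1
  calc l ^ μ * (1 - τ * l) ^ k ≤ l ^ μ * exp (-(k * τ * l)) := by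
        rw [mul_assoc]
        gcongr
        exact one_sub_pow_le_exp_neg_mul hτl k
    _ ≤ (μ / (k * τ * exp 1)) ^ μ := rpow_mul_exp_neg_mul_le hμ (by positivity) hl0
    _ = (μ / (τ * exp 1)) ^ μ * (k : ℝ) ^ (-μ) := by
        rw [mul_assoc, div_mul_eq_div_div_swap, div_rpow (by positivity) hk0.le,
          rpow_neg hk0.le, div_eq_mul_inv]
end

section
/- Let 0 < τ₁ ≤ τ₂ ≤ … ≤ τ_k. Define Q_k(λ) = λ^{-1}[1 − ∏_{i=1}^k (1 − λ/τᵢ)] for λ ≠ 0, extended by continuity to Q_k(0) = Σ_{i=1}^k 1/τᵢ. Then sup_{0 ≤ λ ≤ τ₁} |Q_k(λ)| = Q_k(0) = Σ_{i=1}^k 1/τᵢ. -/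
/-!
For `0 < λ ≤ τ₁` the numbers `xᵢ = λ / τᵢ` lie in `[0, 1]`, so the Weierstrass product inequality
gives `0 ≤ 1 - ∏ (1 - xᵢ) ≤ ∑ xᵢ`; dividing by `λ` yields `0 ≤ Q_k(λ) ≤ ∑ 1 / τᵢ = Q_k(0)`.
-/

open Finset

section WeierstrassProduct

variable {R : Type*} [CommRing R] [LinearOrder R] [IsStrictOrderedRing R]
  {ι : Type*} (s : Finset ι) {f : ι → R}

theorem one_sub_sum_le_prod_one_sub (h0 : ∀ i ∈ s, 0 ≤ f i) (h1 : ∀ i ∈ s, f i ≤ 1) :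
    1 - ∑ i ∈ s, f i ≤ ∏ i ∈ s, (1 - f i) := by
  induction s using Finset.cons_induction with
  | empty => simp
  | cons a s ha ih =>
    rw [sum_cons, prod_cons]
    have ha0 := h0 a (mem_cons_self a s)
    have ha1 := h1 a (mem_cons_self a s)
    have hs : 1 - ∑ i ∈ s, f i ≤ ∏ i ∈ s, (1 - f i) :=
      ih (fun i hi => h0 i (mem_cons_of_mem hi)) fun i hi => h1 i (mem_cons_of_mem hi)
    have hsum : 0 ≤ ∑ i ∈ s, f i := sum_nonneg fun i hi => h0 i (mem_cons_of_mem hi)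
    calc 1 - (f a + ∑ i ∈ s, f i)
        ≤ (1 - f a) * (1 - ∑ i ∈ s, f i) := by nlinarith [mul_nonneg ha0 hsum]
      _ ≤ (1 - f a) * ∏ i ∈ s, (1 - f i) := mul_le_mul_of_nonneg_left hs (sub_nonneg.2 ha1)

theorem abs_one_sub_prod_one_sub_le_sum (h0 : ∀ i ∈ s, 0 ≤ f i) (h1 : ∀ i ∈ s, f i ≤ 1) :
    |1 - ∏ i ∈ s, (1 - f i)| ≤ ∑ i ∈ s, f i := by
  have hprod_le_one : ∏ i ∈ s, (1 - f i) ≤ 1 :=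
    prod_le_one (fun i hi => sub_nonneg.2 (h1 i hi)) fun i hi => sub_le_self 1 (h0 i hi)
  rw [abs_of_nonneg (sub_nonneg.2 hprod_le_one)]
  linarith [one_sub_sum_le_prod_one_sub s h0 h1]

end WeierstrassProduct

theorem abs_inv_mul_one_sub_prod_one_sub_div_le_sum {K : Type*} [Field K] [LinearOrder K]
    [IsStrictOrderedRing K] {ι : Type*} (s : Finset ι) {τ : ι → K} {l : K} (hl : 0 < l)
    (hτ : ∀ i ∈ s, l ≤ τ i) :
    |l⁻¹ * (1 - ∏ i ∈ s, (1 - l / τ i))| ≤ ∑ i ∈ s, 1 / τ i := by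
  rw [abs_mul, abs_inv, abs_of_pos hl, inv_mul_le_iff₀ hl, mul_sum]
  simp only [mul_one_div]
  exact abs_one_sub_prod_one_sub_le_sum s (fun i hi => div_nonneg hl.le (hl.trans_le (hτ i hi)).le)
    fun i hi => div_le_one_of_le₀ (hτ i hi) (hl.trans_le (hτ i hi)).le

theorem multistep_filter_sup_general (k : ℕ) (hk : 0 < k) (τ : Fin k → ℝ)
    (hτmono : Monotone τ)
    (Q : ℝ → ℝ)
    (hQ0 : Q 0 = ∑ i, 1 / τ i)
    (hQ : ∀ l : ℝ, l ≠ 0 → Q l = l⁻¹ * (1 - ∏ i, (1 - l / τ i))) :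
    (∀ l ∈ Set.Icc (0:ℝ) (τ ⟨0, hk⟩), |Q l| ≤ Q 0) ∧ Q 0 = ∑ i, 1 / τ i := by
  have hτ_first_le : ∀ i, τ ⟨0, hk⟩ ≤ τ i := fun i => hτmono (Nat.zero_le i)
  refine ⟨fun l ⟨hl0, hlτ⟩ => ?_, hQ0⟩
  rcases hl0.eq_or_lt with rfl | hl
  · rw [hQ0, abs_of_nonneg]
    exact sum_nonneg fun i _ => one_div_nonneg.2 (hlτ.trans (hτ_first_le i))
  · rw [hQ l hl.ne', hQ0]
    exact abs_inv_mul_one_sub_prod_one_sub_div_le_sum univ hl fun i _ => hlτ.trans (hτ_first_le i)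

theorem multistep_filter_sup (k : ℕ) (hk : 0 < k) (τ : Fin k → ℝ)
    (hτpos : 0 < τ ⟨0, hk⟩) (hτmono : Monotone τ)
    (Q : ℝ → ℝ)
    (hQ0 : Q 0 = ∑ i, 1 / τ i)
    (hQ : ∀ l : ℝ, l ≠ 0 → Q l = l⁻¹ * (1 - ∏ i, (1 - l / τ i))) :
    (∀ l ∈ Set.Icc (0:ℝ) (τ ⟨0, hk⟩), |Q l| ≤ Q 0) ∧ Q 0 = ∑ i, 1 / τ i :=
  multistep_filter_sup_general k hk τ hτmono Q hQ0 hQ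
end

section
/- Let 0 < τ₁ ≤ … ≤ τ_k and μ > 0, and let r_k(λ) = ∏_{i=1}^k (1 − λ/τᵢ) be the residual. Then sup_{0 ≤ λ ≤ τ₁} λ^μ ∏_{i=1}^k (1 − λ/τᵢ) ≤ (μ / Σ_{i=1}^k 1/τᵢ)^μ. -/
theorem multistep_residual_bound (k : ℕ) (hk : 0 < k) (τ : Fin k → ℝ)
    (hτpos : 0 < τ ⟨0, hk⟩) (hτmono : Monotone τ) (μ : ℝ) (hμ : 0 < μ) :
    ∀ l ∈ Set.Icc (0:ℝ) (τ ⟨0, hk⟩),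
      l ^ μ * ∏ i, (1 - l / τ i) ≤ (μ / ∑ i, 1 / τ i) ^ μ := by
  intro l hl
  obtain ⟨hl0, hl1⟩ := hl
  have hτle : ∀ i, τ ⟨0, hk⟩ ≤ τ i := fun i =>
    hτmono (show (⟨0, hk⟩ : Fin k) ≤ i from Nat.zero_le _)
  have hτi : ∀ i, 0 < τ i := fun i => lt_of_lt_of_le hτpos (hτle i)
  set S := ∑ i, 1 / τ i with hS
  have hSpos : 0 < S := by
    have : Nonempty (Fin k) := ⟨⟨0, hk⟩⟩
    exact Finset.sum_pos (fun i _ => by have := hτi i; positivity) Finset.univ_nonempty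
  have hprod : ∏ i, (1 - l / τ i) ≤ Real.exp (-(l * S)) := by
    have h1 : ∏ i, (1 - l / τ i) ≤ ∏ i, Real.exp (-(l / τ i)) := by
      apply Finset.prod_le_prod
      · intro i _
        have : l / τ i ≤ 1 := by
          rw [div_le_one (hτi i)]
          exact hl1.trans (hτle i)
        linarith
      · intro i _
        have := Real.add_one_le_exp (-(l / τ i))
        linarith
    calc ∏ i, (1 - l / τ i) ≤ ∏ i, Real.exp (-(l / τ i)) := h1
      _ = Real.exp (∑ i, -(l / τ i)) := (Real.exp_sum _ _).symm
      _ = Real.exp (-(l * S)) := by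
          congr 1
          rw [hS, Finset.mul_sum, ← Finset.sum_neg_distrib]
          congr 1; ext i; field_simp
  have hRHSnonneg : (0:ℝ) ≤ (μ / S) ^ μ := Real.rpow_nonneg (by positivity) _
  have hkey : l ^ μ * Real.exp (-(l * S)) ≤ (μ / S) ^ μ := by
    rcases eq_or_lt_of_le hl0 with h0 | h0
    · rw [← h0, Real.zero_rpow hμ.ne', zero_mul]
      exact hRHSnonneg
    · set x := l * S with hx
      have hxpos : 0 < x := mul_pos h0 hSpos
      have h1 : x / μ ≤ Real.exp (x / μ) := by
        have := Real.add_one_le_exp (x / μ)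
        linarith
      have h2 : (x / μ) ^ μ ≤ Real.exp (x / μ) ^ μ :=
        Real.rpow_le_rpow (by positivity) h1 hμ.le
      have h3 : Real.exp (x / μ) ^ μ = Real.exp x := by
        rw [← Real.exp_mul, div_mul_cancel₀ _ hμ.ne']
      have hl_eq : l = (μ / S) * (x / μ) := by
        field_simp [hx]; ring
      have hlrpow : l ^ μ = (μ / S) ^ μ * (x / μ) ^ μ := by
        rw [hl_eq, Real.mul_rpow (by positivity) (by positivity)]
      calc l ^ μ * Real.exp (-x)
          = (μ / S) ^ μ * ((x / μ) ^ μ * Real.exp (-x)) := by rw [hlrpow]; ring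
        _ ≤ (μ / S) ^ μ * (Real.exp x * Real.exp (-x)) := by
            apply mul_le_mul_of_nonneg_left _ hRHSnonneg
            exact mul_le_mul_of_nonneg_right (h2.trans_eq h3) (Real.exp_pos _).le
        _ = (μ / S) ^ μ := by rw [← Real.exp_add]; simp
  calc l ^ μ * ∏ i, (1 - l / τ i) ≤ l ^ μ * Real.exp (-(l * S)) := by
        apply mul_le_mul_of_nonneg_left hprod (Real.rpow_nonneg hl0 _)
    _ ≤ (μ / S) ^ μ := hkey
end

section
/- Under the hypotheses of the previous convergence theorem, if moreover sup_{0 ≤ λ ≤ ‖A‖} λ^μ |1 − λ Q_α(λ)| ≤ ω_μ(α) and f = A^μ ω with ‖ω‖ ≤ ρ (A positive self-adjoint compact, spectral power A^μ), then ‖f − Q_α(A) A f‖ ≤ ω_μ(α) · ρ. -/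
/-! In the eigenbasis `b`, the coefficients of `f` are `s j ^ μ * ⟪ω, b j⟫`, so the residual
`f - Q_α(A) A f` has coefficients `s j ^ μ * (1 - s j * Q α (s j)) * ⟪ω, b j⟫`: it is a diagonal
multiplier applied to `ω`, with multiplier bounded by `ωμ α`. By Parseval its norm is at most
`ωμ α * ‖ω‖`. -/

open scoped RealInnerProductSpace

namespace HilbertBasis

variable {ι 𝕜 E : Type*} [RCLike 𝕜] [NormedAddCommGroup E] [InnerProductSpace 𝕜 E]
  (b : HilbertBasis ι 𝕜 E) {m : ι → 𝕜} {M : ℝ}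

theorem memℓp_mul_repr (hm : ∀ i, ‖m i‖ ≤ M) (x : E) :
    Memℓp (fun i => m i * b.repr x i) 2 :=
  ((lp.memℓp (b.repr x)).norm.const_mul M).mono fun i => by
    rw [norm_mul]
    exact mul_le_mul_of_nonneg_right (hm i) (norm_nonneg _)

theorem repr_tsum_smul {c : ι → 𝕜} (hc : Memℓp c 2) (i : ι) :
    b.repr (∑' j, c j • b j) i = c i := by
  rw [(b.hasSum_repr_symm ⟨c, hc⟩).tsum_eq, LinearIsometryEquiv.apply_symm_apply]

theorem summable_mul_repr_smul (hm : ∀ i, ‖m i‖ ≤ M) (x : E) :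
    Summable fun i => (m i * b.repr x i) • b i :=
  (b.hasSum_repr_symm ⟨_, b.memℓp_mul_repr hm x⟩).summable

theorem norm_tsum_mul_repr_smul_le (hM : 0 ≤ M) (hm : ∀ i, ‖m i‖ ≤ M) (x : E) :
    ‖∑' i, (m i * b.repr x i) • b i‖ ≤ M * ‖x‖ := by
  set c : lp (fun _ : ι => 𝕜) 2 := ⟨_, b.memℓp_mul_repr hm x⟩
  rw [(b.hasSum_repr_symm c).tsum_eq, LinearIsometryEquiv.norm_map]
  calc ‖c‖ ≤ ‖(M : 𝕜) • b.repr x‖ := lp.norm_mono two_ne_zero fun i => by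
        simp only [c, lp.coeFn_smul, Pi.smul_apply, smul_eq_mul, norm_mul, RCLike.norm_ofReal,
          abs_of_nonneg hM]
        exact mul_le_mul_of_nonneg_right (hm i) (norm_nonneg _)
    _ = M * ‖x‖ := by
        rw [lp.norm_const_smul two_ne_zero, LinearIsometryEquiv.norm_map, RCLike.norm_ofReal,
          abs_of_nonneg hM]

end HilbertBasis

theorem regularization_source_condition_bound_general
    {H : Type*} [NormedAddCommGroup H] [InnerProductSpace ℝ H]
    (b : HilbertBasis ℕ ℝ H) (A : H →L[ℝ] H) (s : ℕ → ℝ)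
    (hs_nonneg : ∀ j, 0 ≤ s j)
    (hs_le : ∀ j, s j ≤ ‖A‖)
    (Q : ℝ → ℝ → ℝ) (μ ρ : ℝ) (hμ : 0 < μ)
    (ωμ : ℝ → ℝ)
    (hres : ∀ α : ℝ, ∀ l ∈ Set.Icc (0:ℝ) ‖A‖, l ^ μ * |1 - l * Q α l| ≤ ωμ α)
    (ω f : H) (hω : ‖ω‖ ≤ ρ)
    (hf : f = ∑' j, ((s j) ^ μ * ⟪ω, b j⟫) • b j) :
    ∀ α : ℝ, ‖f - ∑' j, (Q α (s j) * s j * ⟪f, b j⟫) • b j‖ ≤ ωμ α * ρ := by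
  intro α
  have hrepr : ∀ x j, b.repr x j = ⟪x, b j⟫ := fun x j => by
    rw [b.repr_apply_apply, real_inner_comm]
  have hωμ : 0 ≤ ωμ α :=
    (Real.rpow_nonneg le_rfl μ).trans (by simpa using hres α 0 ⟨le_rfl, norm_nonneg A⟩)
  have hsource_mult : ∀ j, ‖s j ^ μ‖ ≤ ‖A‖ ^ μ := fun j => by
    rw [Real.norm_of_nonneg (Real.rpow_nonneg (hs_nonneg j) μ)]
    exact Real.rpow_le_rpow (hs_nonneg j) (hs_le j) hμ.le
  have hresidual_mult : ∀ j, ‖s j ^ μ * (1 - s j * Q α (s j))‖ ≤ ωμ α := fun j => by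
    rw [norm_mul, Real.norm_of_nonneg (Real.rpow_nonneg (hs_nonneg j) μ), Real.norm_eq_abs]
    exact hres α (s j) ⟨hs_nonneg j, hs_le j⟩
  have hf_coeff : ∀ j, ⟪f, b j⟫ = s j ^ μ * ⟪ω, b j⟫ := fun j => by
    have := b.repr_tsum_smul (b.memℓp_mul_repr hsource_mult ω) j
    simp only [hrepr] at this
    rw [hf, this]
  have herror : f - ∑' j, (Q α (s j) * s j * ⟪f, b j⟫) • b j =
      ∑' j, (s j ^ μ * (1 - s j * Q α (s j)) * b.repr ω j) • b j := by
    have hsum := (b.summable_mul_repr_smul hsource_mult ω).tsum_sub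
      (b.summable_mul_repr_smul hresidual_mult ω)
    have hcoeff : ∀ j, Q α (s j) * s j * (s j ^ μ * ⟪ω, b j⟫) =
        s j ^ μ * ⟪ω, b j⟫ - s j ^ μ * (1 - s j * Q α (s j)) * ⟪ω, b j⟫ := fun j => by ring
    simp only [hf_coeff, hcoeff, hrepr, sub_smul] at hsum ⊢
    rw [hsum, hf, sub_sub_cancel]
  rw [herror]
  exact (b.norm_tsum_mul_repr_smul_le hωμ hresidual_mult ω).trans (by gcongr)

theorem regularization_source_condition_bound
    {H : Type*} [NormedAddCommGroup H] [InnerProductSpace ℝ H] [CompleteSpace H]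
    (b : HilbertBasis ℕ ℝ H) (A : H →L[ℝ] H) (s : ℕ → ℝ)
    (hs_nonneg : ∀ j, 0 ≤ s j)
    (hs_eig : ∀ j, A (b j) = s j • b j)
    (hs_le : ∀ j, s j ≤ ‖A‖)
    (hA_selfadj : ∀ x y : H, ⟪A x, y⟫ = ⟪x, A y⟫)
    (Q : ℝ → ℝ → ℝ) (μ ρ : ℝ) (hμ : 0 < μ) (hρ : 0 ≤ ρ)
    (ωμ : ℝ → ℝ)
    (hres : ∀ α : ℝ, ∀ l ∈ Set.Icc (0:ℝ) ‖A‖, l ^ μ * |1 - l * Q α l| ≤ ωμ α)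
    (ω f : H) (hω : ‖ω‖ ≤ ρ)
    (hf : f = ∑' j, ((s j) ^ μ * ⟪ω, b j⟫) • b j) :
    ∀ α : ℝ, ‖f - ∑' j, (Q α (s j) * s j * ⟪f, b j⟫) • b j‖ ≤ ωμ α * ρ :=
  regularization_source_condition_bound_general b A s hs_nonneg hs_le Q μ ρ hμ ωμ hres ω f hω hf
end

section
/- Let p > 1/2, k ≥ 1 an integer, τ > 0, and λ_j = j^{-2p} for j = 1,…,m. With Q_k(λ) = λ^{-1}(1−(1−τλ)^k) the Landweber filter, if m ≥ m' := ⌈(τk)^{1/(2p)}⌉ then Σ_{j=1}^m Q_k(λ_j)² λ_j ≤ ((m')^{2p+1})/(2p+1) · C₁ + (τk)² (m')^{1−2p}/(2p−1) · C₂ for explicit constants, and in particular Σ_{j=1}^m Q_k(λ_j)² λ_j ≤ C (τk)^{(2p+1)/(2p)} for a constant C depending only on p. -/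
/-!
With `u = (τk)^{1/(2p)}` and eigenvalues `λ_j = j^{-2p}`, each term `Q_k(λ_j)² λ_j` is at most
`min (j^{2p}) (u^{4p} j^{-2p})`, because `Q_k(λ) ≤ λ⁻¹` and `Q_k(λ) ≤ τk` (Bernoulli). Up to
`j = ⌈u⌉` the first bound sums to at most `(2u)^{2p+1}`; beyond it the second is compared with
`∫_{⌈u⌉}^∞ s^{-2p} ds`, giving `u^{2p+1}/(2p-1)`. Both are multiples of `(τk)^{(2p+1)/(2p)}`.
-/

open Real Finset

noncomputable def landweberFilter (τ : ℝ) (k : ℕ) (x : ℝ) : ℝ :=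
  x⁻¹ * (1 - (1 - τ * x) ^ k)

section LandweberFilter

variable {τ x : ℝ} {k : ℕ}

lemma landweberFilter_nonneg (hx : 0 ≤ x) (h0 : 0 ≤ τ * x) (h2 : τ * x ≤ 2) :
    0 ≤ landweberFilter τ k x := by
  have habs : |1 - τ * x| ≤ 1 := abs_le.2 ⟨by linarith, by linarith⟩
  have hpow : (1 - τ * x) ^ k ≤ 1 :=
    (le_abs_self _).trans (abs_pow (1 - τ * x) k ▸ pow_le_one₀ (abs_nonneg _) habs)
  exact mul_nonneg (inv_nonneg.2 hx) (sub_nonneg.2 hpow)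

lemma landweberFilter_le_mul (hx : 0 < x) (h2 : τ * x ≤ 2) :
    landweberFilter τ k x ≤ τ * k := by
  have bernoulli := one_add_mul_le_pow (a := -(τ * x)) (by linarith) k
  rw [landweberFilter, inv_mul_le_iff₀ hx]
  linear_combination bernoulli

lemma landweberFilter_le_inv (hx : 0 < x) (h1 : τ * x ≤ 1) :
    landweberFilter τ k x ≤ x⁻¹ :=
  mul_le_of_le_one_right (inv_nonneg.2 hx.le) (sub_le_self _ (pow_nonneg (by linarith) _))

lemma landweberFilter_sq_mul_le_min (hx : 0 < x) (h0 : 0 ≤ τ * x) (h1 : τ * x ≤ 1) :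
    landweberFilter τ k x ^ 2 * x ≤ min x⁻¹ ((τ * k) ^ 2 * x) := by
  have hQ := landweberFilter_nonneg (k := k) hx.le h0 (by linarith)
  refine le_min ?_ ?_
  · calc landweberFilter τ k x ^ 2 * x ≤ x⁻¹ ^ 2 * x := by
          gcongr; exact landweberFilter_le_inv hx h1
      _ = x⁻¹ := by field_simp
  · gcongr; exact landweberFilter_le_mul hx (by linarith)

end LandweberFilter

lemma sum_Icc_rpow_le_rpow_add_one {s : ℝ} (hs : 0 ≤ s) (n : ℕ) :
    ∑ j ∈ Icc 1 n, (j : ℝ) ^ s ≤ (n : ℝ) ^ (s + 1) := by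
  calc ∑ j ∈ Icc 1 n, (j : ℝ) ^ s ≤ ∑ _j ∈ Icc 1 n, (n : ℝ) ^ s :=
        sum_le_sum fun j hj => by gcongr; exact_mod_cast (mem_Icc.1 hj).2
    _ = (n : ℝ) ^ (s + 1) := by
        rw [sum_const, Nat.card_Icc, nsmul_eq_mul, rpow_add_one' (by positivity) (by linarith)]
        push_cast; ring

lemma sum_Ioc_rpow_neg_le {s : ℝ} (hs : 1 < s) {n : ℕ} (hn : 0 < n) (m : ℕ) :
    ∑ j ∈ Ioc n m, (j : ℝ) ^ (-s) ≤ (n : ℝ) ^ (1 - s) / (s - 1) := by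
  have hnR : (0 : ℝ) < n := by exact_mod_cast hn
  rcases le_or_gt m n with hmn | hnm
  · rw [Ioc_eq_empty (by omega), sum_empty]
    positivity
  have hanti : AntitoneOn (fun x : ℝ => x ^ (-s)) (Set.Icc (n : ℝ) m) :=
    fun x hx y _ hxy => rpow_le_rpow_of_nonpos (hnR.trans_le hx.1) hxy (by linarith)
  have hshift : ∑ i ∈ Ico n m, ((i + 1 : ℕ) : ℝ) ^ (-s) = ∑ j ∈ Ioc n m, (j : ℝ) ^ (-s) := by
    rw [← Ico_add_one_add_one_eq_Ioc]
    exact sum_Ico_add' (fun j : ℕ => (j : ℝ) ^ (-s)) n m 1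
  have hint : ∫ x in (n : ℝ)..m, x ^ (-s) = ((n : ℝ) ^ (1 - s) - (m : ℝ) ^ (1 - s)) / (s - 1) := by
    rw [integral_rpow (Or.inr ⟨by linarith, ?_⟩)]
    · rw [show -s + 1 = 1 - s by ring, show s - 1 = -(1 - s) by ring, div_neg]
      ring
    · rw [Set.uIcc_of_le (by exact_mod_cast hnm.le)]
      exact fun h => absurd h.1 (not_le.2 hnR)
  calc ∑ j ∈ Ioc n m, (j : ℝ) ^ (-s) ≤ ∫ x in (n : ℝ)..m, x ^ (-s) :=
        hshift ▸ hanti.sum_le_integral_Ico hnm.le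
    _ ≤ (n : ℝ) ^ (1 - s) / (s - 1) := by
        rw [hint]; gcongr
        exact sub_le_self _ (by positivity)

section SpectralSums

variable {p u : ℝ}

lemma sum_Icc_ceil_min_le (hp : 1 / 2 ≤ p) (hu : 0 < u) :
    ∑ j ∈ Icc 1 ⌈u⌉₊, min ((j : ℝ) ^ (2 * p)) ((u ^ (2 * p)) ^ 2 * (j : ℝ) ^ (-(2 * p)))
      ≤ 2 ^ (2 * p + 1) * u ^ (2 * p + 1) := by
  rcases le_or_gt 1 u with hu1 | hu1
  · have hceil : (⌈u⌉₊ : ℝ) ≤ 2 * u := by linarith [Nat.ceil_lt_add_one hu.le]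
    calc _ ≤ ∑ j ∈ Icc 1 ⌈u⌉₊, (j : ℝ) ^ (2 * p) := sum_le_sum fun j _ => min_le_left _ _
      _ ≤ (⌈u⌉₊ : ℝ) ^ (2 * p + 1) := sum_Icc_rpow_le_rpow_add_one (by linarith) _
      _ ≤ (2 * u) ^ (2 * p + 1) := by gcongr
      _ = 2 ^ (2 * p + 1) * u ^ (2 * p + 1) := mul_rpow (by norm_num) hu.le
  · have hceil : ⌈u⌉₊ = 1 :=
      le_antisymm (Nat.ceil_le.2 (by simpa using hu1.le)) (Nat.ceil_pos.2 hu)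
    -- for `u < 1` only `j = 1` remains, and `u^{4p} ≤ u^{2p+1}` since `p ≥ 1/2`
    simp only [hceil, Icc_self, sum_singleton, Nat.cast_one, one_rpow, mul_one]
    calc min 1 ((u ^ (2 * p)) ^ 2) ≤ (u ^ (2 * p)) ^ 2 := min_le_right _ _
      _ = u ^ (4 * p) := by rw [← rpow_mul_natCast hu.le]; ring_nf
      _ ≤ u ^ (2 * p + 1) := rpow_le_rpow_of_exponent_ge hu hu1.le (by linarith)
      _ ≤ 2 ^ (2 * p + 1) * u ^ (2 * p + 1) :=
        le_mul_of_one_le_left (by positivity) (one_le_rpow (by norm_num) (by linarith))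

lemma sum_Ioc_ceil_min_le (hp : 1 / 2 < p) (hu : 0 < u) (m : ℕ) :
    ∑ j ∈ Ioc ⌈u⌉₊ m, min ((j : ℝ) ^ (2 * p)) ((u ^ (2 * p)) ^ 2 * (j : ℝ) ^ (-(2 * p)))
      ≤ u ^ (2 * p + 1) / (2 * p - 1) := by
  calc _ ≤ ∑ j ∈ Ioc ⌈u⌉₊ m, (u ^ (2 * p)) ^ 2 * (j : ℝ) ^ (-(2 * p)) :=
        sum_le_sum fun j _ => min_le_right _ _
    _ = (u ^ (2 * p)) ^ 2 * ∑ j ∈ Ioc ⌈u⌉₊ m, (j : ℝ) ^ (-(2 * p)) := (mul_sum ..).symm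
    _ ≤ (u ^ (2 * p)) ^ 2 * ((⌈u⌉₊ : ℝ) ^ (1 - 2 * p) / (2 * p - 1)) := by
        gcongr; exact sum_Ioc_rpow_neg_le (by linarith) (Nat.ceil_pos.2 hu) m
    _ ≤ (u ^ (2 * p)) ^ 2 * (u ^ (1 - 2 * p) / (2 * p - 1)) := by
        gcongr ?_ * (?_ / _)
        · linarith
        · exact rpow_le_rpow_of_nonpos hu (Nat.le_ceil u) (by linarith)
    _ = u ^ (2 * p + 1) / (2 * p - 1) := by
        rw [sq, mul_div_assoc', ← rpow_add hu, ← rpow_add hu]; ring_nf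

lemma sum_Icc_min_le (hp : 1 / 2 < p) (hu : 0 < u) {m : ℕ} (hm : ⌈u⌉₊ ≤ m) :
    ∑ j ∈ Icc 1 m, min ((j : ℝ) ^ (2 * p)) ((u ^ (2 * p)) ^ 2 * (j : ℝ) ^ (-(2 * p)))
      ≤ (2 ^ (2 * p + 1) + 1 / (2 * p - 1)) * u ^ (2 * p + 1) := by
  rw [add_mul, one_div_mul_eq_div]
  calc _ = ∑ j ∈ Icc 1 ⌈u⌉₊, min ((j : ℝ) ^ (2 * p)) ((u ^ (2 * p)) ^ 2 * (j : ℝ) ^ (-(2 * p)))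
        + ∑ j ∈ Ioc ⌈u⌉₊ m, min ((j : ℝ) ^ (2 * p)) ((u ^ (2 * p)) ^ 2 * (j : ℝ) ^ (-(2 * p))) :=
        (sum_Ioc_consecutive _ (Nat.zero_le _) hm).symm
    _ ≤ _ := add_le_add (sum_Icc_ceil_min_le hp.le hu) (sum_Ioc_ceil_min_le hp hu m)

end SpectralSums

lemma landweberFilter_rpow_neg_sq_mul_le_min {p τ : ℝ} (hp : 0 ≤ p) (hτ : 0 ≤ τ) (hτ1 : τ ≤ 1)
    (k : ℕ) {j : ℕ} (hj : 1 ≤ j) :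
    landweberFilter τ k ((j : ℝ) ^ (-(2 * p))) ^ 2 * (j : ℝ) ^ (-(2 * p))
      ≤ min ((j : ℝ) ^ (2 * p)) ((τ * k) ^ 2 * (j : ℝ) ^ (-(2 * p))) := by
  have hjR : (1 : ℝ) ≤ j := by exact_mod_cast hj
  have hx : (j : ℝ) ^ (-(2 * p)) ≤ 1 := rpow_le_one_of_one_le_of_nonpos hjR (by linarith)
  have h := landweberFilter_sq_mul_le_min (k := k) (rpow_pos_of_pos (by linarith) (-(2 * p)))
    (mul_nonneg hτ (by positivity)) (mul_le_one₀ hτ1 (by positivity) hx)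
  have hinv : ((j : ℝ) ^ (-(2 * p)))⁻¹ = (j : ℝ) ^ (2 * p) := by
    rw [rpow_neg (by positivity), inv_inv]
  rwa [hinv] at h

theorem landweber_variance_trace_bound (p : ℝ) (hp : 1 / 2 < p) :
    ∃ C : ℝ, 0 < C ∧ ∀ (k : ℕ), 1 ≤ k → ∀ τ : ℝ, 0 < τ → τ ≤ 1 →
      ∀ m : ℕ, (⌈(τ * k) ^ (1 / (2 * p))⌉₊ ≤ m) →
        ∑ j ∈ Finset.Icc 1 m,
            (((j : ℝ) ^ (-(2 * p)))⁻¹ * (1 - (1 - τ * (j : ℝ) ^ (-(2 * p))) ^ k)) ^ 2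
              * (j : ℝ) ^ (-(2 * p))
          ≤ C * (τ * k) ^ ((2 * p + 1) / (2 * p)) := by
  have hp2 : 0 < 2 * p - 1 := by linarith
  refine ⟨2 ^ (2 * p + 1) + 1 / (2 * p - 1), by positivity, fun k hk τ hτ hτ1 m hm => ?_⟩
  have ha : 0 < τ * k := mul_pos hτ (by exact_mod_cast hk)
  set u := (τ * k) ^ (1 / (2 * p)) with hu
  have hau : τ * k = u ^ (2 * p) := by
    rw [hu, ← rpow_mul ha.le, one_div_mul_cancel (by linarith), rpow_one]
  have hae : (τ * k) ^ ((2 * p + 1) / (2 * p)) = u ^ (2 * p + 1) := by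
    rw [hu, ← rpow_mul ha.le]; congr 1; field_simp
  rw [hae]
  refine (sum_le_sum fun j hj => ?_).trans (sum_Icc_min_le hp (rpow_pos_of_pos ha _) hm)
  rw [← hau]
  exact landweberFilter_rpow_neg_sq_mul_le_min (by linarith) hτ.le hτ1 k (mem_Icc.1 hj).1
end
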